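/- Let $T^2$ be a bi-tree with $w \equiv 1$, potential $\mathbb{V}^\mu = \mathbb{I}\mathbb{I}^* \mu$, energy $\mathcal{E}[\mu] = \sum_{T^2} (\mathbb{I}^*\mu)^2$, and capacity $\mathrm{cap}(E) = \inf\{ \sum_{T^2} \varphi^2 : \varphi \geq 0,\ \mathbb{I}\varphi \geq 1 \text{ on } E \}$. If $\mu : T^2 \to [0,\infty)$ satisfies $\mathbb{V}^\mu \leq 1$ on $\operatorname{supp}\mu$, then for every $\lambda \geq 1$, $\mathrm{cap}(\{\mathbb{V}^\mu > \lambda\}) \leq C\, \mathcal{E}[\mu] / \lambda^4$ for an absolute constant $C$. -/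

import Mathlib

open Finset
open scoped Classical

/-- A tree order: the set of elements above any given element is totally ordered. -/
def IsTreeOrder (T : Type*) [PartialOrder T] : Prop :=
  ∀ ω a b : T, ω ≤ a → ω ≤ b → a ≤ b ∨ b ≤ a

/-- The Hardy operator `I f α = ∑_{α' ≥ α} f α'`. -/
noncomputable def hI {T : Type*} [Fintype T] [PartialOrder T] (f : T → ℝ) (a : T) : ℝ :=
  ∑ b, if a ≤ b then f b else 0

/-- The adjoint Hardy operator `I* f β = ∑_{α ≤ β} f α`. -/
noncomputable def hIstar {T : Type*} [Fintype T] [PartialOrder T] (f : T → ℝ) (b : T) : ℝ :=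
  ∑ a, if a ≤ b then f a else 0

/-- `b` is a child of `β`: a maximal element of the set of elements strictly below `β`. -/
def IsChild {T : Type*} [PartialOrder T] (b β : T) : Prop :=
  b < β ∧ ∀ c, b < c → c < β → False

/-- The difference operator `Δ f β = f β - ∑_{β' ∈ ch β} f β'`. -/
noncomputable def hDelta {T : Type*} [Fintype T] [PartialOrder T] (f : T → ℝ) (β : T) : ℝ :=
  f β - ∑ b, if IsChild b β then f b else 0

/-- A superadditive function on a tree: `f β ≥ ∑_{β' ∈ ch β} f β'` for all `β`. -/
def Superadd {T : Type*} [Fintype T] [PartialOrder T] (f : T → ℝ) : Prop :=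
  ∀ β : T, (∑ b, if IsChild b β then f b else 0) ≤ f β

/-!
Write `g = I*μ`, `V = I g = V^μ`, and `V₁ = I₁ g`, `V₂ = I₂ g` for the integrals of `g` along
one coordinate only. Since up-sets in each factor are chains, two points `x, y ≥ α` are either
comparable or form a mixed pair (`y.1 ≤ x.1`, `x.2 ≤ y.2`, or the reverse) whose lower corner
`(y.1, x.2)` lies above `α`. Expanding `V(α)² = ∑_{x, y ≥ α} g x g y`, the comparable pairs give at
most `2 I(g V)(α) ≤ 2 V(α)`, because `V ≤ 1` wherever `g ≠ 0`, and the mixed pairs give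
`2 I(V₁ V₂)(α)`. Hence `φ = 2 (V₁ V₂ + g) / λ²` satisfies `I φ ≥ 1` on `{V > λ}`.

Its cost is controlled by `∑ g² = ℰ[μ]` and `∑ (V₁ V₂)² ≤ 4 ℰ[μ]`. For the latter, the tree
inequality `(I f)² ≤ 2 I(f · I f)` gives `(V₁ V₂)² ≤ 4 I₁(g V₁) I₂(g V₂)`; enumerating mixed pairs
by their upper corner `(x.1, y.2)` instead of their lower corner turns `∑ I₁(g V₁) I₂(g V₂)` into
`∑ I*₂(g V₁) I*₁(g V₂)`, and each of these two factors is at most `g`, again because `V ≤ 1` on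
the support of `μ`.
-/

lemma ite_le_ite_of_imp {P Q : Prop} [Decidable P] [Decidable Q] {x : ℝ} (hx : 0 ≤ x)
    (h : P → Q) : (if P then x else 0) ≤ if Q then x else 0 := by
  split_ifs <;> simp_all

lemma ite_le_ite_add_ite {P Q R : Prop} [Decidable P] [Decidable Q] [Decidable R] {x : ℝ}
    (hx : 0 ≤ x) (h : P → Q ∨ R) :
    (if P then x else 0) ≤ (if Q then x else 0) + if R then x else 0 := by
  split_ifs <;> simp_all

lemma sum_sum_ite_mul_le_two_mul {ι : Type*} [Fintype ι] {f : ι → ℝ} (hf : ∀ x, 0 ≤ f x)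
    {P Q : ι → ι → Prop} [∀ x y, Decidable (P x y)] [∀ x y, Decidable (Q x y)]
    (hPQ : ∀ x y, P x y → Q x y ∨ Q y x) :
    ∑ x, ∑ y, (if P x y then f x * f y else 0)
      ≤ 2 * ∑ x, ∑ y, if Q x y then f x * f y else 0 := by
  have hswap : ∑ x, ∑ y, (if Q y x then f x * f y else 0)
      = ∑ x, ∑ y, if Q x y then f x * f y else 0 := by
    rw [sum_comm]; simp only [mul_comm]
  calc ∑ x, ∑ y, (if P x y then f x * f y else 0)
      ≤ ∑ x, ∑ y, ((if Q x y then f x * f y else 0) + if Q y x then f x * f y else 0) :=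
        sum_le_sum fun x _ => sum_le_sum fun y _ =>
          ite_le_ite_add_ite (mul_nonneg (hf x) (hf y)) (hPQ x y)
    _ = 2 * ∑ x, ∑ y, if Q x y then f x * f y else 0 := by
        simp only [sum_add_distrib, hswap]; ring

lemma mul_le_self_of_ne_zero_imp {x y : ℝ} (hx : 0 ≤ x) (h : x ≠ 0 → y ≤ 1) : x * y ≤ x := by
  rcases eq_or_ne x 0 with rfl | hx0
  · simp
  · exact mul_le_of_le_one_right hx (h hx0)

section HardyOperators

variable {S : Type*} [Fintype S] [PartialOrder S]

lemma hI_nonneg {f : S → ℝ} (hf : ∀ x, 0 ≤ f x) (a : S) : 0 ≤ hI f a :=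
  sum_nonneg fun b _ => by split_ifs <;> simp [hf b]

lemma hIstar_nonneg {f : S → ℝ} (hf : ∀ x, 0 ≤ f x) (b : S) : 0 ≤ hIstar f b :=
  sum_nonneg fun a _ => by split_ifs <;> simp [hf a]

lemma hI_antitone {f : S → ℝ} (hf : ∀ x, 0 ≤ f x) : Antitone (hI f) := fun _ _ hab =>
  sum_le_sum fun c _ => ite_le_ite_of_imp (hf c) hab.trans

lemma hI_mono {f g : S → ℝ} (h : ∀ x, f x ≤ g x) (a : S) : hI f a ≤ hI g a :=
  sum_le_sum fun b _ => by split_ifs <;> simp [h b]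

lemma hIstar_mono {f g : S → ℝ} (h : ∀ x, f x ≤ g x) (b : S) : hIstar f b ≤ hIstar g b :=
  sum_le_sum fun a _ => by split_ifs <;> simp [h a]

lemma exists_le_ne_zero_of_hIstar_ne_zero {f : S → ℝ} {b : S} (h : hIstar f b ≠ 0) :
    ∃ a ≤ b, f a ≠ 0 := by
  obtain ⟨a, -, ha⟩ := exists_ne_zero_of_sum_ne_zero h
  by_cases hab : a ≤ b
  · exact ⟨a, hab, by simpa [hab] using ha⟩
  · simp [hab] at ha

lemma hI_add (f g : S → ℝ) (a : S) : hI (fun x => f x + g x) a = hI f a + hI g a := by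
  simp only [hI, ← sum_add_distrib]
  exact sum_congr rfl fun b _ => by split_ifs <;> simp

lemma hI_const_mul (c : ℝ) (f : S → ℝ) (a : S) : hI (fun x => c * f x) a = c * hI f a := by
  simp only [hI, mul_sum]
  exact sum_congr rfl fun b _ => by split_ifs <;> simp

lemma sq_hI [DecidableLE S] (f : S → ℝ) (t : S) :
    hI f t ^ 2 = ∑ x, ∑ y, if t ≤ x ∧ t ≤ y then f x * f y else 0 := by
  simp only [hI, sq, sum_mul_sum]
  exact sum_congr rfl fun x _ => sum_congr rfl fun y _ => by split_ifs <;> simp_all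

lemma hI_mul_hI [DecidableLE S] (f : S → ℝ) (t : S) :
    hI (fun x => f x * hI f x) t = ∑ x, ∑ y, if t ≤ x ∧ x ≤ y then f x * f y else 0 := by
  simp only [hI, mul_sum]
  exact sum_congr rfl fun x _ => by split_ifs <;> simp_all

lemma hIstar_hIstar_mul_le {ν h : S → ℝ} (hν : ∀ x, 0 ≤ ν x) (hh : ∀ x, 0 ≤ h x) (z : S) :
    hIstar (fun u => hIstar ν u * h u) z ≤ hIstar (fun p => ν p * hI h p) z := by
  calc hIstar (fun u => hIstar ν u * h u) z
      = ∑ u, ∑ p, if p ≤ u ∧ u ≤ z then ν p * h u else 0 := by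
        simp only [hIstar, sum_mul]
        exact sum_congr rfl fun u _ => by split_ifs <;> simp_all
    _ ≤ ∑ u, ∑ p, if p ≤ z ∧ p ≤ u then ν p * h u else 0 :=
        sum_le_sum fun u _ => sum_le_sum fun p _ =>
          ite_le_ite_of_imp (mul_nonneg (hν p) (hh u)) fun h => ⟨h.1.trans h.2, h.1⟩
    _ = hIstar (fun p => ν p * hI h p) z := by
        rw [sum_comm]
        simp only [hIstar, hI, mul_sum]
        exact sum_congr rfl fun p _ => by split_ifs <;> simp_all

lemma sq_hI_le_of_isTreeOrder (hS : IsTreeOrder S) {f : S → ℝ} (hf : ∀ x, 0 ≤ f x) (t : S) :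
    hI f t ^ 2 ≤ 2 * hI (fun x => f x * hI f x) t := by
  rw [sq_hI, hI_mul_hI]
  refine sum_sum_ite_mul_le_two_mul hf fun x y ⟨hx, hy⟩ => ?_
  rcases hS t x y hx hy with hxy | hyx
  exacts [Or.inl ⟨hx, hxy⟩, Or.inr ⟨hy, hyx⟩]

end HardyOperators

section BiTree

variable {T1 T2 : Type*} [Fintype T1] [PartialOrder T1] [Fintype T2] [PartialOrder T2]

noncomputable def hI₁ (f : T1 × T2 → ℝ) (a : T1 × T2) : ℝ := hI (fun c => f (c, a.2)) a.1

noncomputable def hI₂ (f : T1 × T2 → ℝ) (a : T1 × T2) : ℝ := hI (fun d => f (a.1, d)) a.2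

noncomputable def hIstar₁ (f : T1 × T2 → ℝ) (a : T1 × T2) : ℝ :=
  hIstar (fun c => f (c, a.2)) a.1

noncomputable def hIstar₂ (f : T1 × T2 → ℝ) (a : T1 × T2) : ℝ :=
  hIstar (fun d => f (a.1, d)) a.2

lemma hI₂_hI₁ (f : T1 × T2 → ℝ) : hI₂ (hI₁ f) = hI f := by
  ext a
  simp only [hI₂, hI₁, hI, Fintype.sum_prod_type, Prod.le_def, ite_sum_zero]
  rw [sum_comm]
  exact sum_congr rfl fun _ _ => sum_congr rfl fun _ _ => by split_ifs <;> simp_all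

lemma hI₁_hI₂ (f : T1 × T2 → ℝ) : hI₁ (hI₂ f) = hI f := by
  ext a
  simp only [hI₂, hI₁, hI, Fintype.sum_prod_type, Prod.le_def, ite_and, ite_sum_zero]

lemma hIstar₂_hIstar₁ (f : T1 × T2 → ℝ) : hIstar₂ (hIstar₁ f) = hIstar f := by
  ext a
  simp only [hIstar₂, hIstar₁, hIstar, Fintype.sum_prod_type, Prod.le_def, ite_sum_zero]
  rw [sum_comm]
  exact sum_congr rfl fun _ _ => sum_congr rfl fun _ _ => by split_ifs <;> simp_all

lemma hIstar₁_hIstar₂ (f : T1 × T2 → ℝ) : hIstar₁ (hIstar₂ f) = hIstar f := by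
  ext a
  simp only [hIstar₂, hIstar₁, hIstar, Fintype.sum_prod_type, Prod.le_def, ite_and,
    ite_sum_zero]

lemma sum_mul_hI₁_mul_hI₂ (w F G : T1 × T2 → ℝ) :
    ∑ β, w β * (hI₁ F β * hI₂ G β)
      = ∑ x, ∑ y, if y.1 ≤ x.1 ∧ x.2 ≤ y.2 then w (y.1, x.2) * (F x * G y) else 0 := by
  calc ∑ β, w β * (hI₁ F β * hI₂ G β)
      = ∑ b₁, ∑ b₂, ∑ c, ∑ d,
          if b₁ ≤ c ∧ b₂ ≤ d then w (b₁, b₂) * (F (c, b₂) * G (b₁, d)) else 0 := by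
        rw [Fintype.sum_prod_type]
        refine sum_congr rfl fun b₁ _ => sum_congr rfl fun b₂ _ => ?_
        simp only [hI₁, hI₂, hI]
        rw [sum_mul_sum]
        simp only [mul_sum]
        exact sum_congr rfl fun c _ => sum_congr rfl fun d _ => by split_ifs <;> simp_all
    _ = ∑ c, ∑ b₂, ∑ b₁, ∑ d,
          if b₁ ≤ c ∧ b₂ ≤ d then w (b₁, b₂) * (F (c, b₂) * G (b₁, d)) else 0 :=
        (sum_congr rfl fun _ _ => sum_comm).trans
          (sum_comm.trans (sum_congr rfl fun _ _ => sum_comm))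
    _ = _ := by simp only [Fintype.sum_prod_type]

lemma sum_hIstar₂_mul_hIstar₁ (F G : T1 × T2 → ℝ) :
    ∑ z, hIstar₂ F z * hIstar₁ G z
      = ∑ x, ∑ y, if y.1 ≤ x.1 ∧ x.2 ≤ y.2 then F x * G y else 0 := by
  calc ∑ z, hIstar₂ F z * hIstar₁ G z
      = ∑ z₁, ∑ z₂, ∑ u, ∑ v, if u ≤ z₂ ∧ v ≤ z₁ then F (z₁, u) * G (v, z₂) else 0 := by
        rw [Fintype.sum_prod_type]
        refine sum_congr rfl fun z₁ _ => sum_congr rfl fun z₂ _ => ?_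
        simp only [hIstar₁, hIstar₂, hIstar, sum_mul_sum]
        exact sum_congr rfl fun u _ => sum_congr rfl fun v _ => by split_ifs <;> simp_all
    _ = ∑ z₁, ∑ u, ∑ v, ∑ z₂, if u ≤ z₂ ∧ v ≤ z₁ then F (z₁, u) * G (v, z₂) else 0 :=
        sum_congr rfl fun _ _ => sum_comm.trans (sum_congr rfl fun _ _ => sum_comm)
    _ = _ := by
        simp only [Fintype.sum_prod_type]
        exact sum_congr rfl fun _ _ => sum_congr rfl fun _ _ => sum_congr rfl fun _ _ =>
          sum_congr rfl fun _ _ => by simp only [and_comm]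

section Potential

variable {μ : T1 × T2 → ℝ}

lemma hI_hIstar_le_one_of_le (hμ : ∀ a, 0 ≤ μ a) (hV : ∀ a, μ a ≠ 0 → hI (hIstar μ) a ≤ 1)
    {a b : T1 × T2} (hab : a ≤ b) (ha : μ a ≠ 0) :
    hI (hIstar μ) b ≤ 1 :=
  (hI_antitone (hIstar_nonneg hμ) hab).trans (hV a ha)

lemma hIstar_mul_hI_hIstar_le (hμ : ∀ a, 0 ≤ μ a) (hV : ∀ a, μ a ≠ 0 → hI (hIstar μ) a ≤ 1)
    (x : T1 × T2) : hIstar μ x * hI (hIstar μ) x ≤ hIstar μ x :=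
  mul_le_self_of_ne_zero_imp (hIstar_nonneg hμ x) fun hx =>
    let ⟨_, hax, ha⟩ := exists_le_ne_zero_of_hIstar_ne_zero hx
    hI_hIstar_le_one_of_le hμ hV hax ha

lemma sq_hI_hIstar_le (h₁ : IsTreeOrder T1) (h₂ : IsTreeOrder T2)
    (hμ : ∀ a, 0 ≤ μ a) (hV : ∀ a, μ a ≠ 0 → hI (hIstar μ) a ≤ 1) (α : T1 × T2) :
    hI (hIstar μ) α ^ 2
      ≤ 2 * hI (fun β => hI₁ (hIstar μ) β * hI₂ (hIstar μ) β) α + 2 * hI (hIstar μ) α := by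
  set g := hIstar μ
  have hg : ∀ x, 0 ≤ g x := hIstar_nonneg hμ
  have hcover : ∀ x y : T1 × T2, α ≤ x ∧ α ≤ y →
      ((α ≤ x ∧ x ≤ y) ∨ ((y.1 ≤ x.1 ∧ x.2 ≤ y.2) ∧ α ≤ (y.1, x.2))) ∨
        ((α ≤ y ∧ y ≤ x) ∨ ((x.1 ≤ y.1 ∧ y.2 ≤ x.2) ∧ α ≤ (x.1, y.2))) := by
    rintro ⟨x₁, x₂⟩ ⟨y₁, y₂⟩ ⟨hx, hy⟩
    rcases h₁ α.1 x₁ y₁ hx.1 hy.1 with c₁ | c₁ <;> rcases h₂ α.2 x₂ y₂ hx.2 hy.2 with c₂ | c₂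
    · exact .inl (.inl ⟨hx, c₁, c₂⟩)
    · exact .inr (.inr ⟨⟨c₁, c₂⟩, hx.1, hy.2⟩)
    · exact .inl (.inr ⟨⟨c₁, c₂⟩, hy.1, hx.2⟩)
    · exact .inr (.inl ⟨hy, c₁, c₂⟩)
  have hmixed : hI (fun β => hI₁ g β * hI₂ g β) α = ∑ x, ∑ y,
      if (y.1 ≤ x.1 ∧ x.2 ≤ y.2) ∧ α ≤ (y.1, x.2) then g x * g y else 0 := by
    have h := sum_mul_hI₁_mul_hI₂ (fun β => if α ≤ β then 1 else 0) g g
    simpa only [hI, ite_and, ite_mul, one_mul, zero_mul] using h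
  calc hI g α ^ 2 = ∑ x, ∑ y, if α ≤ x ∧ α ≤ y then g x * g y else 0 := sq_hI g α
    _ ≤ 2 * ∑ x, ∑ y, if (α ≤ x ∧ x ≤ y) ∨ ((y.1 ≤ x.1 ∧ x.2 ≤ y.2) ∧ α ≤ (y.1, x.2))
          then g x * g y else 0 := sum_sum_ite_mul_le_two_mul hg hcover
    _ ≤ 2 * ((∑ x, ∑ y, if α ≤ x ∧ x ≤ y then g x * g y else 0) + ∑ x, ∑ y,
          if (y.1 ≤ x.1 ∧ x.2 ≤ y.2) ∧ α ≤ (y.1, x.2) then g x * g y else 0) := by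
        rw [← sum_add_distrib]
        gcongr with x _
        rw [← sum_add_distrib]
        gcongr with y _
        exact ite_le_ite_add_ite (mul_nonneg (hg x) (hg y)) id
    _ = 2 * hI (fun x => g x * hI g x) α + 2 * hI (fun β => hI₁ g β * hI₂ g β) α := by
        rw [hI_mul_hI, hmixed]; ring
    _ ≤ 2 * hI (fun β => hI₁ g β * hI₂ g β) α + 2 * hI g α := by
        rw [add_comm]
        gcongr
        exact hI_mono (hIstar_mul_hI_hIstar_le hμ hV) α

lemma one_le_hI_of_lt_hI_hIstar (h₁ : IsTreeOrder T1) (h₂ : IsTreeOrder T2)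
    (hμ : ∀ a, 0 ≤ μ a) (hV : ∀ a, μ a ≠ 0 → hI (hIstar μ) a ≤ 1)
    {lam : ℝ} (hlam : 0 < lam) {a : T1 × T2} (ha : lam < hI (hIstar μ) a) :
    1 ≤ hI (fun β => 2 / lam ^ 2 * (hI₁ (hIstar μ) β * hI₂ (hIstar μ) β + hIstar μ β)) a := by
  rw [hI_const_mul, hI_add, div_mul_eq_mul_div, le_div_iff₀ (by positivity)]
  nlinarith [sq_hI_hIstar_le h₁ h₂ hμ hV a]

lemma hIstar₂_mul_hI₁_le (hμ : ∀ a, 0 ≤ μ a) (hV : ∀ a, μ a ≠ 0 → hI (hIstar μ) a ≤ 1)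
    (z : T1 × T2) :
    hIstar₂ (fun x => hIstar μ x * hI₁ (hIstar μ) x) z ≤ hIstar μ z := by
  set ν := fun p => hIstar₁ μ (z.1, p)
  have hg : ∀ u, hIstar μ (z.1, u) = hIstar ν u := fun u => by rw [← hIstar₂_hIstar₁]; rfl
  have hν : ∀ p, ν p * hI₂ (hI₁ (hIstar μ)) (z.1, p) ≤ ν p := fun p =>
    mul_le_self_of_ne_zero_imp (hIstar_nonneg (fun _ => hμ _) _) fun hp => by
      obtain ⟨a, ha, hμa⟩ := exists_le_ne_zero_of_hIstar_ne_zero hp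
      rw [hI₂_hI₁]
      exact hI_hIstar_le_one_of_le hμ hV (Prod.mk_le_mk.2 ⟨ha, le_rfl⟩) hμa
  calc hIstar₂ (fun x => hIstar μ x * hI₁ (hIstar μ) x) z
      = hIstar (fun u => hIstar ν u * hI₁ (hIstar μ) (z.1, u)) z.2 := by simp only [hIstar₂, hg]
    _ ≤ hIstar (fun p => ν p * hI₂ (hI₁ (hIstar μ)) (z.1, p)) z.2 :=
        hIstar_hIstar_mul_le (fun _ => hIstar_nonneg (fun _ => hμ _) _)
          (fun _ => hI_nonneg (fun _ => hIstar_nonneg hμ _) _) z.2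
    _ ≤ hIstar ν z.2 := hIstar_mono hν z.2
    _ = hIstar μ z := (hg z.2).symm

lemma hIstar₁_mul_hI₂_le (hμ : ∀ a, 0 ≤ μ a) (hV : ∀ a, μ a ≠ 0 → hI (hIstar μ) a ≤ 1)
    (z : T1 × T2) :
    hIstar₁ (fun x => hIstar μ x * hI₂ (hIstar μ) x) z ≤ hIstar μ z := by
  set ν := fun p => hIstar₂ μ (p, z.2)
  have hg : ∀ u, hIstar μ (u, z.2) = hIstar ν u := fun u => by rw [← hIstar₁_hIstar₂]; rfl
  have hν : ∀ p, ν p * hI₁ (hI₂ (hIstar μ)) (p, z.2) ≤ ν p := fun p =>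
    mul_le_self_of_ne_zero_imp (hIstar_nonneg (fun _ => hμ _) _) fun hp => by
      obtain ⟨a, ha, hμa⟩ := exists_le_ne_zero_of_hIstar_ne_zero hp
      rw [hI₁_hI₂]
      exact hI_hIstar_le_one_of_le hμ hV (Prod.mk_le_mk.2 ⟨le_rfl, ha⟩) hμa
  calc hIstar₁ (fun x => hIstar μ x * hI₂ (hIstar μ) x) z
      = hIstar (fun u => hIstar ν u * hI₂ (hIstar μ) (u, z.2)) z.1 := by simp only [hIstar₁, hg]
    _ ≤ hIstar (fun p => ν p * hI₁ (hI₂ (hIstar μ)) (p, z.2)) z.1 :=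
        hIstar_hIstar_mul_le (fun _ => hIstar_nonneg (fun _ => hμ _) _)
          (fun _ => hI_nonneg (fun _ => hIstar_nonneg hμ _) _) z.1
    _ ≤ hIstar ν z.1 := hIstar_mono hν z.1
    _ = hIstar μ z := (hg z.1).symm

lemma sum_sq_hI₁_mul_hI₂_le (h₁ : IsTreeOrder T1) (h₂ : IsTreeOrder T2)
    (hμ : ∀ a, 0 ≤ μ a) (hV : ∀ a, μ a ≠ 0 → hI (hIstar μ) a ≤ 1) :
    ∑ β, (hI₁ (hIstar μ) β * hI₂ (hIstar μ) β) ^ 2 ≤ 4 * ∑ z, hIstar μ z ^ 2 := by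
  set g := hIstar μ
  have hg : ∀ x, 0 ≤ g x := hIstar_nonneg hμ
  set F := fun x => g x * hI₁ g x
  set G := fun x => g x * hI₂ g x
  have hpt : ∀ β, (hI₁ g β * hI₂ g β) ^ 2 ≤ 4 * (hI₁ F β * hI₂ G β) := fun β => by
    have e₁ : hI₁ g β ^ 2 ≤ 2 * hI₁ F β := sq_hI_le_of_isTreeOrder h₁ (fun _ => hg _) β.1
    have e₂ : hI₂ g β ^ 2 ≤ 2 * hI₂ G β := sq_hI_le_of_isTreeOrder h₂ (fun _ => hg _) β.2
    calc (hI₁ g β * hI₂ g β) ^ 2 = hI₁ g β ^ 2 * hI₂ g β ^ 2 := mul_pow _ _ _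
      _ ≤ (2 * hI₁ F β) * (2 * hI₂ G β) :=
          mul_le_mul e₁ e₂ (sq_nonneg _) ((sq_nonneg _).trans e₁)
      _ = 4 * (hI₁ F β * hI₂ G β) := by ring
  have hswitch : ∑ β, hI₁ F β * hI₂ G β = ∑ z, hIstar₂ F z * hIstar₁ G z := by
    simpa only [Pi.one_apply, one_mul, sum_hIstar₂_mul_hIstar₁] using sum_mul_hI₁_mul_hI₂ 1 F G
  calc ∑ β, (hI₁ g β * hI₂ g β) ^ 2
      ≤ ∑ β, 4 * (hI₁ F β * hI₂ G β) := sum_le_sum fun β _ => hpt β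
    _ = 4 * ∑ z, hIstar₂ F z * hIstar₁ G z := by rw [← mul_sum, hswitch]
    _ ≤ 4 * ∑ z, hIstar μ z ^ 2 := by
        gcongr with z
        rw [sq]
        exact mul_le_mul (hIstar₂_mul_hI₁_le hμ hV z) (hIstar₁_mul_hI₂_le hμ hV z)
          (hIstar_nonneg (fun _ => mul_nonneg (hg _) (hI_nonneg (fun _ => hg _) _)) _) (hg z)

lemma sum_sq_hI₁_mul_hI₂_add_le (h₁ : IsTreeOrder T1) (h₂ : IsTreeOrder T2)
    (hμ : ∀ a, 0 ≤ μ a) (hV : ∀ a, μ a ≠ 0 → hI (hIstar μ) a ≤ 1) :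
    ∑ β, (hI₁ (hIstar μ) β * hI₂ (hIstar μ) β + hIstar μ β) ^ 2 ≤ 10 * ∑ z, hIstar μ z ^ 2 := by
  calc ∑ β, (hI₁ (hIstar μ) β * hI₂ (hIstar μ) β + hIstar μ β) ^ 2
      ≤ ∑ β, 2 * ((hI₁ (hIstar μ) β * hI₂ (hIstar μ) β) ^ 2 + hIstar μ β ^ 2) :=
        sum_le_sum fun β _ => add_sq_le
    _ ≤ 10 * ∑ z, hIstar μ z ^ 2 := by
        rw [← mul_sum, sum_add_distrib]
        linarith [sum_sq_hI₁_mul_hI₂_le h₁ h₂ hμ hV]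

end Potential

end BiTree

theorem stmt15 :
    ∃ C : ℝ, 0 < C ∧
      ∀ (T1 T2 : Type) [Fintype T1] [PartialOrder T1] [Fintype T2] [PartialOrder T2],
        IsTreeOrder T1 → IsTreeOrder T2 →
        ∀ μ : T1 × T2 → ℝ, (∀ a, 0 ≤ μ a) →
        (∀ a, μ a ≠ 0 → hI (hIstar μ) a ≤ 1) →
        ∀ lam : ℝ, 1 ≤ lam →
        sInf { c : ℝ | ∃ φ : T1 × T2 → ℝ, (∀ a, 0 ≤ φ a) ∧
            (∀ a, lam < hI (hIstar μ) a → 1 ≤ hI φ a) ∧ c = ∑ a, φ a ^ 2 }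
          ≤ C * (∑ a, hIstar μ a ^ 2) / lam ^ 4 := by
  refine ⟨40, by norm_num, fun T1 T2 _ _ _ _ h₁ h₂ μ hμ hV lam hlam => ?_⟩
  have hlam₀ : 0 < lam := one_pos.trans_le hlam
  set g := hIstar μ
  have hg : ∀ x, 0 ≤ g x := hIstar_nonneg hμ
  set φ := fun β => 2 / lam ^ 2 * (hI₁ g β * hI₂ g β + g β)
  have hφ : ∀ β, 0 ≤ φ β := fun β =>
    mul_nonneg (by positivity) (add_nonneg
      (mul_nonneg (hI_nonneg (fun _ => hg _) _) (hI_nonneg (fun _ => hg _) _)) (hg β))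
  refine csInf_le_of_le ⟨0, ?_⟩
    ⟨φ, hφ, fun a ha => one_le_hI_of_lt_hI_hIstar h₁ h₂ hμ hV hlam₀ ha, rfl⟩ ?_
  · rintro c ⟨ψ, -, -, rfl⟩
    positivity
  calc ∑ a, φ a ^ 2 = 4 / lam ^ 4 * ∑ β, (hI₁ g β * hI₂ g β + g β) ^ 2 := by
        rw [mul_sum]; exact sum_congr rfl fun β _ => by ring
    _ ≤ 4 / lam ^ 4 * (10 * ∑ z, g z ^ 2) := by
        gcongr; exact sum_sq_hI₁_mul_hI₂_add_le h₁ h₂ hμ hV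
    _ = 40 * (∑ a, g a ^ 2) / lam ^ 4 := by ring
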